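/- Converse Frobenius: if a fibration p : C → B has fiberwise exponentials and stable fiberwise products, and a morphism f : A → B admits, for every P in the fiber over A, a cocartesian lift with domain P satisfying Frobenius reciprocity, then exponential diagrams in the fiber over B are stable under pullback along f. -/

import Mathlib

open CategoryTheory CategoryTheory.Limits CategoryTheory.Functor

namespace FOHL

variable {𝒮 : Type*} {𝒳 : Type*} [Category 𝒮] [Category 𝒳]

variable (p : 𝒳 ⥤ 𝒮)

/-- A binary product diagram in the fiber of `p` over `S`. -/
structure IsFiberProductFan (S : 𝒮) {P Q T : 𝒳} (π₁ : T ⟶ P) (π₂ : T ⟶ Q) : Prop where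
  lift₁ : p.IsHomLift (𝟙 S) π₁
  lift₂ : p.IsHomLift (𝟙 S) π₂
  universal : ∀ {X : 𝒳} (u : X ⟶ P) (v : X ⟶ Q),
    p.IsHomLift (𝟙 S) u → p.IsHomLift (𝟙 S) v →
      ∃! w : X ⟶ T, p.IsHomLift (𝟙 S) w ∧ w ≫ π₁ = u ∧ w ≫ π₂ = v

/-- A binary coproduct diagram in the fiber of `p` over `S`. -/
structure IsFiberCoproductCofan (S : 𝒮) {P Q T : 𝒳} (ι₁ : P ⟶ T) (ι₂ : Q ⟶ T) : Prop where
  lift₁ : p.IsHomLift (𝟙 S) ι₁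
  lift₂ : p.IsHomLift (𝟙 S) ι₂
  universal : ∀ {X : 𝒳} (u : P ⟶ X) (v : Q ⟶ X),
    p.IsHomLift (𝟙 S) u → p.IsHomLift (𝟙 S) v →
      ∃! w : T ⟶ X, p.IsHomLift (𝟙 S) w ∧ ι₁ ≫ w = u ∧ ι₂ ≫ w = v

/-- A terminal object of the fiber of `p` over `S`. -/
structure IsFiberTerminal (S : 𝒮) (T : 𝒳) : Prop where
  over_eq : p.obj T = S
  universal : ∀ X : 𝒳, p.obj X = S → ∃! u : X ⟶ T, p.IsHomLift (𝟙 S) u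

/-- An initial object of the fiber of `p` over `S`. -/
structure IsFiberInitial (S : 𝒮) (T : 𝒳) : Prop where
  over_eq : p.obj T = S
  universal : ∀ X : 𝒳, p.obj X = S → ∃! u : T ⟶ X, p.IsHomLift (𝟙 S) u

/-- An exponential diagram in the fiber of `p` over `S`: `E` is the exponential `P ⟹ Q`,
`π₁ : W ⟶ E`, `π₂ : W ⟶ P` is a product fan exhibiting `W = E ∧ P`, and `ev : W ⟶ Q` is the
evaluation morphism. -/
structure IsFiberExponential (S : 𝒮) {P Q E W : 𝒳}
    (π₁ : W ⟶ E) (π₂ : W ⟶ P) (ev : W ⟶ Q) : Prop where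
  fan : IsFiberProductFan p S π₁ π₂
  ev_lift : p.IsHomLift (𝟙 S) ev
  universal : ∀ {X V : 𝒳} (ρ₁ : V ⟶ X) (ρ₂ : V ⟶ P), IsFiberProductFan p S ρ₁ ρ₂ →
    ∀ g : V ⟶ Q, p.IsHomLift (𝟙 S) g →
      ∃! h : X ⟶ E, p.IsHomLift (𝟙 S) h ∧
        ∀ m : V ⟶ W, p.IsHomLift (𝟙 S) m → m ≫ π₁ = ρ₁ ≫ h → m ≫ π₂ = ρ₂ →
          m ≫ ev = g

/-- Stability of fiberwise binary product diagrams under pullback along `f`. -/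
def ProductsStableAlong {R S : 𝒮} (f : R ⟶ S) : Prop :=
  ∀ {P Q T P' Q' T' : 𝒳} (π₁ : T ⟶ P) (π₂ : T ⟶ Q)
    (π₁' : T' ⟶ P') (π₂' : T' ⟶ Q') (cP : P' ⟶ P) (cQ : Q' ⟶ Q) (cT : T' ⟶ T),
    IsFiberProductFan p S π₁ π₂ →
    p.IsStronglyCartesian f cP → p.IsStronglyCartesian f cQ → p.IsStronglyCartesian f cT →
    p.IsHomLift (𝟙 R) π₁' → p.IsHomLift (𝟙 R) π₂' →
    π₁' ≫ cP = cT ≫ π₁ → π₂' ≫ cQ = cT ≫ π₂ →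
    IsFiberProductFan p R π₁' π₂'

/-- Stability of fiberwise binary coproduct diagrams under pullback along `f`. -/
def CoproductsStableAlong {R S : 𝒮} (f : R ⟶ S) : Prop :=
  ∀ {P Q T P' Q' T' : 𝒳} (ι₁ : P ⟶ T) (ι₂ : Q ⟶ T)
    (ι₁' : P' ⟶ T') (ι₂' : Q' ⟶ T') (cP : P' ⟶ P) (cQ : Q' ⟶ Q) (cT : T' ⟶ T),
    IsFiberCoproductCofan p S ι₁ ι₂ →
    p.IsStronglyCartesian f cP → p.IsStronglyCartesian f cQ → p.IsStronglyCartesian f cT →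
    p.IsHomLift (𝟙 R) ι₁' → p.IsHomLift (𝟙 R) ι₂' →
    ι₁' ≫ cT = cP ≫ ι₁ → ι₂' ≫ cT = cQ ≫ ι₂ →
    IsFiberCoproductCofan p R ι₁' ι₂'

/-- Stability of fiberwise exponential diagrams under pullback along `f`. -/
def ExponentialsStableAlong {R S : 𝒮} (f : R ⟶ S) : Prop :=
  ∀ {P Q E W P' Q' E' W' : 𝒳} (π₁ : W ⟶ E) (π₂ : W ⟶ P) (ev : W ⟶ Q)
    (π₁' : W' ⟶ E') (π₂' : W' ⟶ P') (ev' : W' ⟶ Q')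
    (cE : E' ⟶ E) (cP : P' ⟶ P) (cQ : Q' ⟶ Q) (cW : W' ⟶ W),
    IsFiberExponential p S π₁ π₂ ev →
    p.IsStronglyCartesian f cE → p.IsStronglyCartesian f cP →
    p.IsStronglyCartesian f cQ → p.IsStronglyCartesian f cW →
    p.IsHomLift (𝟙 R) π₁' → p.IsHomLift (𝟙 R) π₂' → p.IsHomLift (𝟙 R) ev' →
    π₁' ≫ cE = cW ≫ π₁ → π₂' ≫ cP = cW ≫ π₂ → ev' ≫ cQ = cW ≫ ev →
    IsFiberExponential p R π₁' π₂' ev'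

/-- A `Π`-diagram over `f : R ⟶ S` based on `P` (with `P` in the fiber over `R`): a cartesian
morphism `c : X ⟶ Y` over `f` (so `X = f*Y`, `Y = Π_f P`) and a vertical evaluation morphism
`ε : X ⟶ P` which is universal: for every cartesian `c' : X' ⟶ Y'` over `f` and vertical
`u : X' ⟶ P` there is a unique vertical `v : Y' ⟶ Y` whose pullback composed with `ε` is `u`. -/
structure IsPiDiagram {R S : 𝒮} (f : R ⟶ S) {P X Y : 𝒳} (c : X ⟶ Y) (ε : X ⟶ P) : Prop where
  cart : p.IsStronglyCartesian f c
  vert : p.IsHomLift (𝟙 R) ε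
  universal : ∀ {X' Y' : 𝒳} (c' : X' ⟶ Y'), p.IsStronglyCartesian f c' →
    ∀ u : X' ⟶ P, p.IsHomLift (𝟙 R) u →
      ∃! v : Y' ⟶ Y, p.IsHomLift (𝟙 S) v ∧
        ∀ w : X' ⟶ X, p.IsHomLift (𝟙 R) w → w ≫ c = c' ≫ v → w ≫ ε = u

/-- The Beck–Chevalley condition: stability of a `Π`-diagram over `g : Cc ⟶ D` along
`k : Bb ⟶ D`.  For every pullback square and every pullback of the diagram along the square,
the resulting diagram is again a `Π`-diagram. -/
def PiDiagramStableAlong {Cc D : 𝒮} (g : Cc ⟶ D) {P X Y : 𝒳} (c : X ⟶ Y) (ε : X ⟶ P)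
    {Bb : 𝒮} (k : Bb ⟶ D) : Prop :=
  ∀ {A : 𝒮} (f : A ⟶ Bb) (h : A ⟶ Cc), IsPullback f h k g →
    ∀ {P' X' Y' : 𝒳} (cP : P' ⟶ P) (cX : X' ⟶ X) (cY : Y' ⟶ Y)
      (q : X' ⟶ Y') (ε' : X' ⟶ P'),
      p.IsStronglyCartesian h cP → p.IsStronglyCartesian h cX → p.IsStronglyCartesian k cY →
      p.IsHomLift f q → q ≫ cY = cX ≫ c →
      p.IsHomLift (𝟙 A) ε' → ε' ≫ cP = cX ≫ ε →
      IsPiDiagram p f q ε'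

/-- Stability of a cocartesian lift `t : P ⟶ Z` of `g : Cc ⟶ D` along `k : Bb ⟶ D`:
for every pullback square, the induced comparison morphism between the pullbacks is again
cocartesian. -/
def CocartesianStableAlong {Cc D : 𝒮} (g : Cc ⟶ D) {P Z : 𝒳} (t : P ⟶ Z)
    {Bb : 𝒮} (k : Bb ⟶ D) : Prop :=
  ∀ {A : 𝒮} (f : A ⟶ Bb) (h : A ⟶ Cc), IsPullback f h k g →
    ∀ {P' Z' : 𝒳} (cP : P' ⟶ P) (cZ : Z' ⟶ Z) (m : P' ⟶ Z'),
      p.IsStronglyCartesian h cP → p.IsStronglyCartesian k cZ →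
      p.IsHomLift f m → m ≫ cZ = cP ≫ t →
      p.IsStronglyCocartesian f m

end FOHL

open CategoryTheory CategoryTheory.Functor FOHL

/-- A cocartesian lift `t : P ⟶ SfP` of `f` satisfies Frobenius reciprocity if, for every
cartesian lift `c : Qf ⟶ Q` of `f` and fiberwise product diagrams on `(P, Qf)` and
`(SfP, Q)`, the induced morphism `t ∧ c` over `f` between the products is cocartesian. -/
def SatisfiesFrobenius {𝒮 𝒳 : Type*} [Category 𝒮] [Category 𝒳] (p : 𝒳 ⥤ 𝒮)
    {R S : 𝒮} (f : R ⟶ S) {P SfP : 𝒳} (t : P ⟶ SfP) : Prop :=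
  ∀ {Q Qf T T' : 𝒳} (c : Qf ⟶ Q), p.IsStronglyCartesian f c →
    ∀ (π₁ : T ⟶ P) (π₂ : T ⟶ Qf), IsFiberProductFan p R π₁ π₂ →
    ∀ (ρ₁ : T' ⟶ SfP) (ρ₂ : T' ⟶ Q), IsFiberProductFan p S ρ₁ ρ₂ →
    ∀ m : T ⟶ T', p.IsHomLift f m → m ≫ ρ₁ = π₁ ≫ t → m ≫ ρ₂ = π₂ ≫ c →
      p.IsStronglyCocartesian f m


/-! Write `f*` for pullback along cartesian lifts of `f` and let `t : X ⟶ Σ_f X` be cocartesian.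
Vertical maps `X ⟶ f*(P ⟹ Q)` correspond to vertical maps `Σ_f X ⟶ P ⟹ Q`, i.e. to vertical
maps `Σ_f X ∧ P ⟶ Q`. Frobenius reciprocity says that `X ∧ f*P ⟶ Σ_f X ∧ P` is cocartesian, so
these correspond to maps `X ∧ f*P ⟶ Q` over `f`, i.e. to vertical maps `X ∧ f*P ⟶ f*Q`. Since
products are stable, `f*(P ⟹ Q) ∧ f*P` is `f*((P ⟹ Q) ∧ P)`, and this makes the composite
correspondence compatible with evaluation. -/

namespace FOHL

variable {𝒮 𝒳 : Type*} [Category 𝒮] [Category 𝒳]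

/-- `ev ∘ (h ∧ P) = g`, where `ρ₁, ρ₂` exhibit `V` as `X ∧ P`. -/
def IsFiberTranspose (p : 𝒳 ⥤ 𝒮) (S : 𝒮) {P Q E W X V : 𝒳} (π₁ : W ⟶ E) (π₂ : W ⟶ P)
    (ev : W ⟶ Q) (ρ₁ : V ⟶ X) (ρ₂ : V ⟶ P) (h : X ⟶ E) (g : V ⟶ Q) : Prop :=
  ∀ m : V ⟶ W, p.IsHomLift (𝟙 S) m → m ≫ π₁ = ρ₁ ≫ h → m ≫ π₂ = ρ₂ → m ≫ ev = g

lemma eq_iff_eq_of_comp_eq_comp (p : 𝒳 ⥤ 𝒮) {R S : 𝒮} (f : R ⟶ S) {V U Q' Q : 𝒳}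
    (m : V ⟶ U) (c : Q' ⟶ Q) [p.IsStronglyCocartesian f m] [p.IsStronglyCartesian f c]
    {a a' : V ⟶ Q'} {b b' : U ⟶ Q} [p.IsHomLift (𝟙 R) a] [p.IsHomLift (𝟙 R) a']
    [p.IsHomLift (𝟙 S) b] [p.IsHomLift (𝟙 S) b'] (h : a ≫ c = m ≫ b) (h' : a' ≫ c = m ≫ b') :
    a = a' ↔ b = b' := by
  constructor
  · rintro rfl
    exact IsStronglyCocartesian.ext p f m (𝟙 S) (h.symm.trans h')
  · rintro rfl
    exact IsStronglyCartesian.ext p f c (𝟙 R) (h.trans h'.symm)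

variable {p : 𝒳 ⥤ 𝒮}

namespace IsFiberProductFan

section

variable {S : 𝒮} {P Q T : 𝒳} {π₁ : T ⟶ P} {π₂ : T ⟶ Q}

lemma hom_ext (hπ : IsFiberProductFan p S π₁ π₂) {X : 𝒳} {w w' : X ⟶ T}
    [p.IsHomLift (𝟙 S) w] [p.IsHomLift (𝟙 S) w'] (h₁ : w ≫ π₁ = w' ≫ π₁)
    (h₂ : w ≫ π₂ = w' ≫ π₂) : w = w' := by
  have := hπ.lift₁; have := hπ.lift₂
  exact (hπ.universal (w' ≫ π₁) (w' ≫ π₂) inferInstance inferInstance).unique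
    ⟨inferInstance, h₁, h₂⟩ ⟨inferInstance, rfl, rfl⟩

lemma isFiberTranspose_iff (hπ : IsFiberProductFan p S π₁ π₂) {E X V : 𝒳} {ev : T ⟶ E}
    {ρ₁ : V ⟶ X} {ρ₂ : V ⟶ Q} {h : X ⟶ P} {g : V ⟶ E} {m : V ⟶ T} [p.IsHomLift (𝟙 S) m]
    (h₁ : m ≫ π₁ = ρ₁ ≫ h) (h₂ : m ≫ π₂ = ρ₂) :
    IsFiberTranspose p S π₁ π₂ ev ρ₁ ρ₂ h g ↔ m ≫ ev = g := by
  refine ⟨fun H => H m inferInstance h₁ h₂, fun H m' hm' h₁' h₂' => ?_⟩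
  have := hm'
  rw [hπ.hom_ext (h₁'.trans h₁.symm) (h₂'.trans h₂.symm), H]

end

lemma existsUnique_isHomLift_of_pullback {R S : 𝒮} {f : R ⟶ S} {P Q T P' Q' T' : 𝒳}
    {π₁ : T ⟶ P} {π₂ : T ⟶ Q} {π₁' : T' ⟶ P'} {π₂' : T' ⟶ Q'}
    (hπ' : IsFiberProductFan p R π₁' π₂') (cP : P' ⟶ P) (cQ : Q' ⟶ Q) (cT : T' ⟶ T)
    [p.IsStronglyCartesian f cP] [p.IsStronglyCartesian f cQ] [p.IsStronglyCartesian f cT]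
    (h₁ : π₁' ≫ cP = cT ≫ π₁) (h₂ : π₂' ≫ cQ = cT ≫ π₂) {V : 𝒳} (u : V ⟶ P) (v : V ⟶ Q)
    [p.IsHomLift f u] [p.IsHomLift f v] :
    ∃! m : V ⟶ T, p.IsHomLift f m ∧ m ≫ π₁ = u ∧ m ≫ π₂ = v := by
  have := hπ'.lift₁; have := hπ'.lift₂
  have hf : f = 𝟙 R ≫ f := (Category.id_comp f).symm
  obtain ⟨w, ⟨hw, hw₁, hw₂⟩, -⟩ := hπ'.universal (IsStronglyCartesian.map p f cP hf u)
    (IsStronglyCartesian.map p f cQ hf v) inferInstance inferInstance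
  have e₁ : (w ≫ cT) ≫ π₁ = u := by
    rw [Category.assoc, ← h₁, ← Category.assoc, hw₁, IsStronglyCartesian.fac]
  have e₂ : (w ≫ cT) ≫ π₂ = v := by
    rw [Category.assoc, ← h₂, ← Category.assoc, hw₂, IsStronglyCartesian.fac]
  refine ⟨w ≫ cT, ⟨inferInstance, e₁, e₂⟩, fun m ⟨hm, hm₁, hm₂⟩ => ?_⟩
  rw [← IsStronglyCartesian.fac p f cT hf m]
  congr 1
  refine hπ'.hom_ext (IsStronglyCartesian.ext p f cP (𝟙 R) ?_)
    (IsStronglyCartesian.ext p f cQ (𝟙 R) ?_)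
  · simp only [Category.assoc, h₁]
    simp only [← Category.assoc, IsStronglyCartesian.fac, hm₁, e₁]
  · simp only [Category.assoc, h₂]
    simp only [← Category.assoc, IsStronglyCartesian.fac, hm₂, e₂]

lemma existsUnique_isHomLift [p.IsFibered] {R S : 𝒮} {f : R ⟶ S} {P Q T : 𝒳}
    {π₁ : T ⟶ P} {π₂ : T ⟶ Q} (hπ : IsFiberProductFan p S π₁ π₂)
    (hstable : ProductsStableAlong p f) {V : 𝒳} (u : V ⟶ P) (v : V ⟶ Q)
    [p.IsHomLift f u] [p.IsHomLift f v] :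
    ∃! m : V ⟶ T, p.IsHomLift f m ∧ m ≫ π₁ = u ∧ m ≫ π₂ = v := by
  have := hπ.lift₁; have := hπ.lift₂
  obtain ⟨P', cP, _⟩ := IsPreFibered.exists_isCartesian p (IsHomLift.codomain_eq p (𝟙 S) π₁) f
  obtain ⟨Q', cQ, _⟩ := IsPreFibered.exists_isCartesian p (IsHomLift.codomain_eq p (𝟙 S) π₂) f
  obtain ⟨T', cT, _⟩ := IsPreFibered.exists_isCartesian p (IsHomLift.domain_eq p (𝟙 S) π₁) f
  have hf : f = 𝟙 R ≫ f := (Category.id_comp f).symm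
  have hπ' := hstable π₁ π₂ (IsStronglyCartesian.map p f cP hf (cT ≫ π₁))
    (IsStronglyCartesian.map p f cQ hf (cT ≫ π₂)) cP cQ cT hπ inferInstance inferInstance
    inferInstance inferInstance inferInstance (IsStronglyCartesian.fac ..) (IsStronglyCartesian.fac ..)
  exact hπ'.existsUnique_isHomLift_of_pullback cP cQ cT (IsStronglyCartesian.fac ..)
    (IsStronglyCartesian.fac ..) u v

end IsFiberProductFan

section Pullback

variable {R S : 𝒮} {f : R ⟶ S} {P Q E W P' Q' E' W' X V Z U : 𝒳}
  {π₁ : W ⟶ E} {π₂ : W ⟶ P} {ev : W ⟶ Q} {π₁' : W' ⟶ E'} {π₂' : W' ⟶ P'} {ev' : W' ⟶ Q'}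
  {cE : E' ⟶ E} {cP : P' ⟶ P} {cQ : Q' ⟶ Q} {cW : W' ⟶ W}
  {ρ₁ : V ⟶ X} {ρ₂ : V ⟶ P'} {σ₁ : U ⟶ Z} {σ₂ : U ⟶ P}

lemma isFiberTranspose_iff_of_pullback
    [p.IsStronglyCartesian f cE] [p.IsStronglyCartesian f cP] [p.IsStronglyCartesian f cQ]
    [p.IsStronglyCartesian f cW] [p.IsHomLift (𝟙 S) ev] [p.IsHomLift (𝟙 R) ev']
    [p.IsHomLift (𝟙 R) ρ₁] [p.IsHomLift (𝟙 R) ρ₂] [p.IsHomLift (𝟙 S) σ₁] [p.IsHomLift (𝟙 S) σ₂]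
    (hπ : IsFiberProductFan p S π₁ π₂) (hπ' : IsFiberProductFan p R π₁' π₂')
    (wE : π₁' ≫ cE = cW ≫ π₁) (wP : π₂' ≫ cP = cW ≫ π₂) (wQ : ev' ≫ cQ = cW ≫ ev)
    {t : X ⟶ Z} {m : V ⟶ U} [p.IsStronglyCocartesian f m]
    (hm₁ : m ≫ σ₁ = ρ₁ ≫ t) (hm₂ : m ≫ σ₂ = ρ₂ ≫ cP)
    {h : X ⟶ E'} {vb : Z ⟶ E} [p.IsHomLift (𝟙 R) h] [p.IsHomLift (𝟙 S) vb]
    (hvb : h ≫ cE = t ≫ vb)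
    {g : V ⟶ Q'} {gb : U ⟶ Q} [p.IsHomLift (𝟙 R) g] [p.IsHomLift (𝟙 S) gb]
    (hgb : g ≫ cQ = m ≫ gb) :
    IsFiberTranspose p R π₁' π₂' ev' ρ₁ ρ₂ h g ↔ IsFiberTranspose p S π₁ π₂ ev σ₁ σ₂ vb gb := by
  have := hπ.lift₁; have := hπ.lift₂; have := hπ'.lift₁; have := hπ'.lift₂
  obtain ⟨w', ⟨hw', hw'₁, hw'₂⟩, -⟩ := hπ'.universal (ρ₁ ≫ h) ρ₂ inferInstance inferInstance
  obtain ⟨w, ⟨hw, hw₁, hw₂⟩, -⟩ := hπ.universal (σ₁ ≫ vb) σ₂ inferInstance inferInstance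
  have hsquare : w' ≫ cW = m ≫ w := by
    refine (hπ'.existsUnique_isHomLift_of_pullback (f := f) cE cP cW wE wP
      ((m ≫ w) ≫ π₁) ((m ≫ w) ≫ π₂)).unique (y₁ := w' ≫ cW) ⟨inferInstance, ?_, ?_⟩
      ⟨inferInstance, rfl, rfl⟩
    · simp only [Category.assoc, ← wE, reassoc_of% hw'₁, hvb, hw₁, reassoc_of% hm₁]
    · simp only [Category.assoc, ← wP, reassoc_of% hw'₂, hw₂, hm₂]
  rw [hπ'.isFiberTranspose_iff hw'₁ hw'₂, hπ.isFiberTranspose_iff hw₁ hw₂]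
  exact eq_iff_eq_of_comp_eq_comp p f m cQ (by rw [Category.assoc, wQ, reassoc_of% hsquare]) hgb

lemma IsFiberExponential.existsUnique_isFiberTranspose_of_pullback
    [p.IsStronglyCartesian f cE] [p.IsStronglyCartesian f cP] [p.IsStronglyCartesian f cQ]
    [p.IsStronglyCartesian f cW] [p.IsHomLift (𝟙 R) ev']
    [p.IsHomLift (𝟙 R) ρ₁] [p.IsHomLift (𝟙 R) ρ₂]
    (hExp : IsFiberExponential p S π₁ π₂ ev) (hπ' : IsFiberProductFan p R π₁' π₂')
    (wE : π₁' ≫ cE = cW ≫ π₁) (wP : π₂' ≫ cP = cW ≫ π₂) (wQ : ev' ≫ cQ = cW ≫ ev)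
    (hσ : IsFiberProductFan p S σ₁ σ₂) {t : X ⟶ Z} [p.IsStronglyCocartesian f t]
    {m : V ⟶ U} [p.IsStronglyCocartesian f m] (hm₁ : m ≫ σ₁ = ρ₁ ≫ t) (hm₂ : m ≫ σ₂ = ρ₂ ≫ cP)
    {g : V ⟶ Q'} [p.IsHomLift (𝟙 R) g] :
    ∃! h : X ⟶ E', p.IsHomLift (𝟙 R) h ∧ IsFiberTranspose p R π₁' π₂' ev' ρ₁ ρ₂ h g := by
  have := hExp.ev_lift; have := hσ.lift₁; have := hσ.lift₂
  have transpose_iff := fun (h : X ⟶ E') (vb : Z ⟶ E) [p.IsHomLift (𝟙 R) h]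
      [p.IsHomLift (𝟙 S) vb] (hvb : h ≫ cE = t ≫ vb) =>
    isFiberTranspose_iff_of_pullback (f := f) hExp.fan hπ' wE wP wQ hm₁ hm₂ hvb
      (IsStronglyCocartesian.fac p f m (Category.comp_id f).symm (g ≫ cQ)).symm
  obtain ⟨hb, ⟨hhb, hbT⟩, hb_uniq⟩ := hExp.universal σ₁ σ₂ hσ
    (IsStronglyCocartesian.map p f m (Category.comp_id f).symm (g ≫ cQ)) inferInstance
  let h := IsStronglyCartesian.map p f cE (Category.id_comp f).symm (t ≫ hb)
  have hfac : h ≫ cE = t ≫ hb := IsStronglyCartesian.fac ..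
  refine ⟨h, ⟨inferInstance, (transpose_iff h hb hfac).2 hbT⟩, fun h' ⟨hh', hT'⟩ => ?_⟩
  let vb := IsStronglyCocartesian.map p f t (Category.comp_id f).symm (h' ≫ cE)
  have hvb : t ≫ vb = h' ≫ cE := IsStronglyCocartesian.fac ..
  have hvb_eq : vb = hb := hb_uniq vb ⟨inferInstance, (transpose_iff h' vb hvb.symm).1 hT'⟩
  exact IsStronglyCartesian.ext p f cE (𝟙 R) (by rw [hfac, ← hvb_eq, hvb])

end Pullback

end FOHL

theorem exponentials_stable_of_frobenius_general
    {𝒮 𝒳 : Type*} [Category 𝒮] [Category 𝒳] (p : 𝒳 ⥤ 𝒮) [p.IsFibered]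
    (hprod : ∀ (S : 𝒮) (P Q : 𝒳), p.obj P = S → p.obj Q = S →
      ∃ (T : 𝒳) (π₁ : T ⟶ P) (π₂ : T ⟶ Q), IsFiberProductFan p S π₁ π₂)
    (hprodStable : ∀ {R S : 𝒮} (f : R ⟶ S), ProductsStableAlong p f)
    {A B : 𝒮} (f : A ⟶ B)
    (hcocart : ∀ P : 𝒳, p.obj P = A → ∃ (Z : 𝒳) (t : P ⟶ Z),
      p.IsStronglyCocartesian f t ∧ SatisfiesFrobenius p f t) :
    ExponentialsStableAlong p f := by
  intro P Q E W P' Q' E' W' π₁ π₂ ev π₁' π₂' ev' cE cP cQ cW hExp hcE hcP hcQ hcW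
    hπ₁' hπ₂' hev' wE wP wQ
  have hπ' : IsFiberProductFan p A π₁' π₂' :=
    hprodStable f π₁ π₂ π₁' π₂' cE cP cW hExp.fan hcE hcP hcW hπ₁' hπ₂' wE wP
  refine ⟨hπ', hev', fun {X V} ρ₁ ρ₂ hρ g hg => ?_⟩
  have := hρ.lift₁; have := hρ.lift₂
  obtain ⟨Z, t, ht, hFrob⟩ := hcocart X (IsHomLift.codomain_eq p (𝟙 A) ρ₁)
  obtain ⟨U, σ₁, σ₂, hσ⟩ :=
    hprod B Z P (IsHomLift.codomain_eq p f t) (IsHomLift.codomain_eq p f cP)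
  obtain ⟨m, ⟨hm, hm₁, hm₂⟩, -⟩ := hσ.existsUnique_isHomLift (hprodStable f) (ρ₁ ≫ t) (ρ₂ ≫ cP)
  have := hFrob cP hcP ρ₁ ρ₂ hρ σ₁ σ₂ hσ m hm hm₁ hm₂
  exact hExp.existsUnique_isFiberTranspose_of_pullback (f := f) hπ' wE wP wQ hσ hm₁ hm₂

/-- converse Frobenius. If a fibration `p : 𝒳 ⥤ 𝒮` has fiberwise
exponentials and stable fiberwise products, and `f : A ⟶ B` admits, for every `P` in the
fiber over `A`, a cocartesian lift with domain `P` satisfying Frobenius reciprocity, then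
the exponential diagrams in the fiber over `B` are stable under pullback along `f`. -/
theorem exponentials_stable_of_frobenius
    {𝒮 𝒳 : Type*} [Category 𝒮] [Category 𝒳] (p : 𝒳 ⥤ 𝒮) [p.IsFibered]
    (hprod : ∀ (S : 𝒮) (P Q : 𝒳), p.obj P = S → p.obj Q = S →
      ∃ (T : 𝒳) (π₁ : T ⟶ P) (π₂ : T ⟶ Q), IsFiberProductFan p S π₁ π₂)
    (hprodStable : ∀ {R S : 𝒮} (f : R ⟶ S), ProductsStableAlong p f)
    (hexp : ∀ (S : 𝒮) (P Q : 𝒳), p.obj P = S → p.obj Q = S →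
      ∃ (E W : 𝒳) (π₁ : W ⟶ E) (π₂ : W ⟶ P) (ev : W ⟶ Q), IsFiberExponential p S π₁ π₂ ev)
    {A B : 𝒮} (f : A ⟶ B)
    (hcocart : ∀ P : 𝒳, p.obj P = A → ∃ (Z : 𝒳) (t : P ⟶ Z),
      p.IsStronglyCocartesian f t ∧ SatisfiesFrobenius p f t) :
    ExponentialsStableAlong p f :=
  exponentials_stable_of_frobenius_general p hprod hprodStable f hcocart
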